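/- arXiv:1310.5729 — 3 statements merged into one kernel-verified Lean document; each statement's English description precedes it below -/
import Mathlib

section
/- Let d ≥ 1 and let A and B be subsets of ℤ^d such that the lower density of A equals α > 0 and the Banach density of B is positive. Then for every ε > 0, A + B is lower syndetic of level α − ε; that is, there exists m ∈ ℕ such that for all k ∈ ℕ, the lower density of the set {z ∈ ℤ^d : z + [-k,k]^d ⊆ A + B + [-m,m]^d} is at least α − ε. -/
open Filter Pointwise

/-- The `d`-dimensional cube `[-m, m]^d` in `ℤ^d`. -/
def cube (d m : ℕ) : Set (Fin d → ℤ) :=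
  Set.Icc (fun _ => -(m : ℤ)) (fun _ => (m : ℤ))

/-- The translated cube `z + [-k, k]^d`. -/
def cubeAt (d k : ℕ) (z : Fin d → ℤ) : Set (Fin d → ℤ) :=
  Set.Icc (fun i => z i - (k : ℤ)) (fun i => z i + (k : ℤ))

/-- Lower asymptotic density of `A ⊆ ℤ^d`. -/
noncomputable def lowerDensity (d : ℕ) (A : Set (Fin d → ℤ)) : ℝ :=
  liminf (fun n : ℕ => (Set.ncard (A ∩ cube d n) : ℝ) / (2 * (n : ℝ) + 1) ^ d) atTop

/-- (Upper) Banach density of `A ⊆ ℤ^d`; the limit defining it exists, so we may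
express it as a `limsup`. -/
noncomputable def banachDensity (d : ℕ) (A : Set (Fin d → ℤ)) : ℝ :=
  limsup (fun n : ℕ =>
    (⨆ x : Fin d → ℤ, (Set.ncard (A ∩ cubeAt d n x) : ℝ)) / (2 * (n : ℝ) + 1) ^ d) atTop

/-!
Thickening `B` by a fixed cube makes it almost full on arbitrarily large cubes: tile a cube on
which `B` has density close to `BD(B)` by cubes of a fixed radius `r` on none of which `B` has
density much above `BD(B)`; the tiles meeting `B` then fill almost all of the big cube, and they
lie in `B + [-2r, 2r]^d`. So `C = B + [-m, m]^d` has density `≥ 1 - δ` on cubes `x + [-n, n]^d`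
with `n ≫ k`. If `z + [-k, k]^d ⊄ A + C`, some `y` in it has `y - A` disjoint from `C`, so `A`
has density `≤ 2δ` on the cube of radius `n + k` around `z - x`. Double counting the points of
`A` in these cubes, as `z` runs over a large cube, shows that the remaining (good) `z` have lower
density at least `d_(A) - 2δ`.
-/

namespace LatticeCube

lemma one_sub_mul_pow_le_pow {a b θ : ℝ} (ha : 0 < a) (hb : 0 ≤ b) (n : ℕ)
    (h : n * (a - b) ≤ θ * a) : (1 - θ) * a ^ n ≤ b ^ n := by
  set t := (a - b) / a
  have hb_eq : b = a * (1 - t) := by rw [mul_sub, mul_div_cancel₀ _ ha.ne']; ring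
  have hdt : n * t ≤ θ := by rw [← mul_div_assoc, div_le_iff₀ ha]; exact h
  have ht : -2 ≤ -t := by
    have : t ≤ 1 := by rw [div_le_one ha]; linarith
    linarith
  have hbernoulli : 1 - n * t ≤ (1 - t) ^ n := by
    simpa [sub_eq_add_neg] using one_add_mul_le_pow ht n
  calc (1 - θ) * a ^ n ≤ (1 - n * t) * a ^ n := by gcongr
    _ ≤ (1 - t) ^ n * a ^ n := by gcongr
    _ = b ^ n := by rw [hb_eq, mul_pow, mul_comm]

lemma eventually_one_sub_mul_pow_le (d s : ℕ) {δ : ℝ} (hδ : 0 < δ) :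
    ∀ᶠ n : ℕ in atTop,
      (1 - δ) * (2 * ((n + s : ℕ) : ℝ) + 1) ^ d ≤ (2 * (n : ℝ) + 1) ^ d := by
  filter_upwards [(tendsto_natCast_atTop_atTop (R := ℝ)).eventually_ge_atTop (d * s / δ)]
    with n hn
  rw [div_le_iff₀ hδ] at hn
  refine one_sub_mul_pow_le_pow (by positivity) (by positivity) d ?_
  push_cast
  nlinarith [(s.cast_nonneg : (0 : ℝ) ≤ s)]

lemma eventually_one_sub_mul_pow_le_sub (d s : ℕ) {δ : ℝ} (hδ : 0 < δ) :
    ∀ᶠ N : ℕ in atTop,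
      (1 - δ) * (2 * (N : ℝ) + 1) ^ d ≤ (2 * ((N - s : ℕ) : ℝ) + 1) ^ d := by
  filter_upwards [(tendsto_sub_atTop_nat s).eventually (eventually_one_sub_mul_pow_le d s hδ),
    eventually_ge_atTop s] with N hN hsN
  rwa [Nat.sub_add_cancel hsN] at hN

variable {d : ℕ}

noncomputable def cubeFinset (k : ℕ) (z : Fin d → ℤ) : Finset (Fin d → ℤ) :=
  Finset.Icc (fun i => z i - k) (fun i => z i + k)

noncomputable def cubeCount (A : Set (Fin d → ℤ)) (k : ℕ) (z : Fin d → ℤ) : ℕ :=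
  (A ∩ cubeAt d k z).ncard

lemma mem_cubeFinset {k : ℕ} {z w : Fin d → ℤ} :
    w ∈ cubeFinset k z ↔ ∀ i, z i - k ≤ w i ∧ w i ≤ z i + k := by
  simp [cubeFinset, Pi.le_def, forall_and]

lemma coe_cubeFinset (k : ℕ) (z : Fin d → ℤ) :
    (cubeFinset k z : Set (Fin d → ℤ)) = cubeAt d k z := by
  simp [cubeFinset, cubeAt]

lemma mem_cubeAt {k : ℕ} {z w : Fin d → ℤ} :
    w ∈ cubeAt d k z ↔ ∀ i, z i - k ≤ w i ∧ w i ≤ z i + k := by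
  rw [← coe_cubeFinset, Finset.mem_coe, mem_cubeFinset]

lemma card_cubeFinset (k : ℕ) (z : Fin d → ℤ) : (cubeFinset k z).card = (2 * k + 1) ^ d := by
  have h : ∀ i, (Finset.Icc (z i - k) (z i + k)).card = 2 * k + 1 := fun i => by
    rw [Int.card_Icc]; omega
  simp only [cubeFinset, Pi.card_Icc, h, Finset.prod_const, Finset.card_univ, Fintype.card_fin]

lemma ncard_cubeAt (k : ℕ) (z : Fin d → ℤ) : (cubeAt d k z).ncard = (2 * k + 1) ^ d := by
  rw [← coe_cubeFinset, Set.ncard_coe_finset, card_cubeFinset]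

lemma cubeAt_finite (k : ℕ) (z : Fin d → ℤ) : (cubeAt d k z).Finite := Set.finite_Icc _ _

lemma cube_eq_cubeAt_zero (k : ℕ) : cube d k = cubeAt d k 0 := by
  simp [cube, cubeAt]

lemma cubeCount_le (A : Set (Fin d → ℤ)) (k : ℕ) (z : Fin d → ℤ) :
    cubeCount A k z ≤ (2 * k + 1) ^ d :=
  ncard_cubeAt k z ▸ Set.ncard_le_ncard Set.inter_subset_right (cubeAt_finite k z)

lemma cubeCount_le_real (A : Set (Fin d → ℤ)) (k : ℕ) (z : Fin d → ℤ) :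
    (cubeCount A k z : ℝ) ≤ (2 * (k : ℝ) + 1) ^ d := by
  exact_mod_cast cubeCount_le A k z

lemma cubeCount_eq_card_filter (A : Set (Fin d → ℤ)) [DecidablePred (· ∈ A)] (k : ℕ)
    (z : Fin d → ℤ) : cubeCount A k z = ((cubeFinset k z).filter (· ∈ A)).card := by
  rw [cubeCount, ← Set.ncard_coe_finset, Finset.coe_filter, ← coe_cubeFinset]
  congr 1
  ext w
  simp [and_comm]

lemma exists_mem_cube (v : Fin d → ℤ) : ∃ V : ℕ, v ∈ cube d V := by
  refine ⟨Finset.univ.sup fun i => (v i).natAbs, fun i => ?_, fun i => ?_⟩ <;>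
  · have := Finset.le_sup (f := fun i => (v i).natAbs) (Finset.mem_univ i)
    simp only at this ⊢
    omega

lemma card_le_cubeCount {A : Set (Fin d → ℤ)} {k : ℕ} {z : Fin d → ℤ}
    {U : Finset (Fin d → ℤ)} (hU : ∀ w ∈ U, w ∈ A ∧ w ∈ cubeAt d k z) :
    U.card ≤ cubeCount A k z := by
  rw [← Set.ncard_coe_finset]
  exact Set.ncard_le_ncard (fun w hw => hU w hw) ((cubeAt_finite k z).inter_of_right A)

lemma cubeCount_add_le_of_subset (A : Set (Fin d → ℤ)) {k K : ℕ} {z w : Fin d → ℤ}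
    (h : cubeAt d k z ⊆ cubeAt d K w) :
    cubeCount A K w + (2 * k + 1) ^ d ≤ cubeCount A k z + (2 * K + 1) ^ d := by
  have hdiff := Set.ncard_sdiff_add_ncard_of_subset h (cubeAt_finite K w)
  rw [ncard_cubeAt, ncard_cubeAt] at hdiff
  have hcover : A ∩ cubeAt d K w ⊆ (A ∩ cubeAt d k z) ∪ (cubeAt d K w \ cubeAt d k z) := by
    rintro v ⟨hvA, hvK⟩
    by_cases hvk : v ∈ cubeAt d k z
    · exact Or.inl ⟨hvA, hvk⟩
    · exact Or.inr ⟨hvK, hvk⟩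
  have hle := (Set.ncard_le_ncard hcover (((cubeAt_finite k z).inter_of_right A).union
    ((cubeAt_finite K w).sdiff))).trans (Set.ncard_union_le _ _)
  unfold cubeCount
  omega

lemma cubeCount_add_cubeCount_le_of_notMem_add {A C : Set (Fin d → ℤ)} {y : Fin d → ℤ}
    (hy : y ∉ A + C) (k : ℕ) (x : Fin d → ℤ) :
    cubeCount A k (y - x) + cubeCount C k x ≤ (2 * k + 1) ^ d := by
  have hreflect :
      (fun w => y - w) '' (A ∩ cubeAt d k (y - x)) = {w | y - w ∈ A} ∩ cubeAt d k x := by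
    ext w
    simp only [Set.mem_image, Set.mem_inter_iff, Set.mem_ofPred_eq, mem_cubeAt, Pi.sub_apply]
    constructor
    · rintro ⟨a, ⟨ha, hak⟩, rfl⟩
      refine ⟨by simpa using ha, fun i => ?_⟩
      have := hak i; simp only [Pi.sub_apply]; omega
    · rintro ⟨hw, hwk⟩
      refine ⟨y - w, ⟨hw, fun i => ?_⟩, by simp⟩
      have := hwk i
      simp only [Pi.sub_apply]
      omega
  have hdisj : Disjoint ({w | y - w ∈ A} ∩ cubeAt d k x) (C ∩ cubeAt d k x) :=
    Set.disjoint_left.mpr fun w hwA hwC => hy ⟨y - w, hwA.1, w, hwC.1, by simp⟩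
  unfold cubeCount
  rw [← Set.ncard_image_of_injective _ (sub_right_injective (b := y)), hreflect,
    ← Set.ncard_union_eq hdisj ((cubeAt_finite k x).inter_of_right _)
      ((cubeAt_finite k x).inter_of_right _), ← Set.union_inter_distrib_right]
  exact cubeCount_le _ k x

section Cells

variable (x : Fin d → ℤ) (r : ℕ)

/-- The grid of pairwise disjoint cubes of radius `r` centred at `x + (2r+1) ℤ^d` tiles `ℤ^d`;
this is the centre of the tile containing `w`. -/
def cellCenter (w : Fin d → ℤ) : Fin d → ℤ :=
  fun i => x i + (2 * r + 1) * ((w i - x i + r) / (2 * r + 1))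

lemma mem_cubeFinset_cellCenter (w : Fin d → ℤ) : w ∈ cubeFinset r (cellCenter x r w) := by
  rw [mem_cubeFinset]
  intro i
  have h1 := Int.mul_ediv_add_emod (w i - x i + r) (2 * r + 1)
  have h2 := Int.emod_nonneg (w i - x i + r) (by positivity : (2 * r + 1 : ℤ) ≠ 0)
  have h3 := Int.emod_lt_of_pos (w i - x i + r) (by positivity : (0 : ℤ) < 2 * r + 1)
  simp only [cellCenter]
  omega

lemma cellCenter_eq_of_mem {w w' : Fin d → ℤ} (hw : w ∈ cubeFinset r (cellCenter x r w')) :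
    cellCenter x r w = cellCenter x r w' := by
  rw [mem_cubeFinset] at hw
  funext i
  have hwi := hw i
  simp only [cellCenter] at hwi ⊢
  congr 2
  have := mul_comm (2 * (r : ℤ) + 1) ((w' i - x i + r) / (2 * r + 1))
  rw [Int.ediv_eq_iff_of_pos (by positivity)]
  omega

open Classical in
/-- The centres of the tiles meeting `B ∩ [x - n, x + n]`. -/
noncomputable def cellCenters (B : Set (Fin d → ℤ)) (n : ℕ) : Finset (Fin d → ℤ) :=
  ((cubeFinset n x).filter (· ∈ B)).image (cellCenter x r)

lemma cubeCount_le_sum_cubeCount_cellCenters (B : Set (Fin d → ℤ)) (n : ℕ) :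
    cubeCount B n x ≤ ∑ y ∈ cellCenters x r B n, cubeCount B r y := by
  classical
  rw [cubeCount_eq_card_filter, Finset.card_eq_sum_card_fiberwise (f := cellCenter x r)
    (t := cellCenters x r B n)
    fun w hw => Finset.mem_image_of_mem _ hw]
  refine Finset.sum_le_sum fun y _ => card_le_cubeCount fun w hw => ?_
  obtain ⟨hwF, rfl⟩ := Finset.mem_filter.mp hw
  exact ⟨(Finset.mem_filter.mp hwF).2, coe_cubeFinset r _ ▸ mem_cubeFinset_cellCenter x r w⟩

lemma card_cellCenters_mul_le_cubeCount (B : Set (Fin d → ℤ)) (n : ℕ) :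
    (cellCenters x r B n).card * (2 * r + 1) ^ d ≤
      cubeCount (B + cube d (2 * r)) (n + 2 * r) x := by
  classical
  have hdisj : (cellCenters x r B n : Set (Fin d → ℤ)).PairwiseDisjoint (cubeFinset r) := by
    intro y₁ hy₁ y₂ hy₂ hne
    obtain ⟨b₁, -, rfl⟩ := Finset.mem_image.mp hy₁
    obtain ⟨b₂, -, rfl⟩ := Finset.mem_image.mp hy₂
    refine Finset.disjoint_left.mpr fun w hw₁ hw₂ => hne ?_
    rw [← cellCenter_eq_of_mem x r hw₁, cellCenter_eq_of_mem x r hw₂]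
  have hcard : ((cellCenters x r B n).biUnion (cubeFinset r)).card =
      (cellCenters x r B n).card * (2 * r + 1) ^ d := by
    simp [Finset.card_biUnion hdisj, card_cubeFinset]
  rw [← hcard]
  refine card_le_cubeCount fun w hw => ?_
  obtain ⟨_, hy, hwy⟩ := Finset.mem_biUnion.mp hw
  obtain ⟨b, hbF, rfl⟩ := Finset.mem_image.mp hy
  obtain ⟨hbx, hbB⟩ := Finset.mem_filter.mp hbF
  have hbc := mem_cubeFinset_cellCenter x r b
  rw [mem_cubeFinset] at hbx hwy hbc
  refine ⟨⟨b, hbB, w - b, ?_, add_sub_cancel b w⟩, mem_cubeAt.mpr fun i => ?_⟩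
  · rw [cube_eq_cubeAt_zero, mem_cubeAt]
    intro i
    have := hwy i; have := hbc i
    simp only [Pi.sub_apply, Pi.zero_apply]
    push_cast
    omega
  · have := hbx i; have := hwy i; have := hbc i
    push_cast
    omega

end Cells

lemma cubeCount_div_nonneg (A : Set (Fin d → ℤ)) (n : ℕ) :
    0 ≤ (cubeCount A n 0 : ℝ) / (2 * (n : ℝ) + 1) ^ d := by positivity

lemma cubeCount_div_le_one (A : Set (Fin d → ℤ)) (n : ℕ) :
    (cubeCount A n 0 : ℝ) / (2 * (n : ℝ) + 1) ^ d ≤ 1 :=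
  div_le_one_of_le₀ (cubeCount_le_real A n 0) (by positivity)

lemma lowerDensity_eq_liminf (A : Set (Fin d → ℤ)) :
    lowerDensity d A =
      liminf (fun n : ℕ => (cubeCount A n 0 : ℝ) / (2 * (n : ℝ) + 1) ^ d) atTop := by
  simp only [lowerDensity, cubeCount, cube_eq_cubeAt_zero]

lemma lowerDensity_le_one (A : Set (Fin d → ℤ)) : lowerDensity d A ≤ 1 := by
  rw [lowerDensity_eq_liminf]
  exact liminf_le_of_frequently_le (.of_forall (cubeCount_div_le_one A))
    (isBoundedUnder_of ⟨0, cubeCount_div_nonneg A⟩)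

lemma eventually_mul_le_cubeCount {A : Set (Fin d → ℤ)} {c : ℝ} (hc : c < lowerDensity d A) :
    ∀ᶠ n : ℕ in atTop, c * (2 * (n : ℝ) + 1) ^ d ≤ cubeCount A n 0 := by
  rw [lowerDensity_eq_liminf] at hc
  filter_upwards [eventually_lt_of_lt_liminf hc (isBoundedUnder_of ⟨0, cubeCount_div_nonneg A⟩)]
    with n hn
  exact ((lt_div_iff₀ (by positivity)).mp hn).le

lemma le_lowerDensity_of_eventually {A : Set (Fin d → ℤ)} {c : ℝ}
    (h : ∀ᶠ n : ℕ in atTop, c * (2 * (n : ℝ) + 1) ^ d ≤ cubeCount A n 0) :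
    c ≤ lowerDensity d A := by
  rw [lowerDensity_eq_liminf]
  refine le_liminf_of_le (isCoboundedUnder_ge_of_le atTop (cubeCount_div_le_one A)) ?_
  filter_upwards [h] with n hn
  exact (le_div_iff₀ (by positivity)).mpr hn

lemma eventually_mul_le_cubeCount_sub {A : Set (Fin d → ℤ)} {c : ℝ}
    (hc : c < lowerDensity d A) (s : ℕ) :
    ∀ᶠ N : ℕ in atTop, c * (2 * (N : ℝ) + 1) ^ d ≤ cubeCount A (N - s) 0 := by
  set α := lowerDensity d A
  have hα := lowerDensity_le_one A
  have hη : 0 < (α - c) / 2 := by linarith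
  filter_upwards [(tendsto_sub_atTop_nat s).eventually
      (eventually_mul_le_cubeCount (A := A) (c := α - (α - c) / 2) (by linarith)),
    eventually_one_sub_mul_pow_le_sub d s hη] with N hA hratio
  rcases le_or_gt c 0 with hc0 | hc0
  · exact (mul_nonpos_of_nonpos_of_nonneg hc0 (by positivity)).trans (Nat.cast_nonneg _)
  calc c * (2 * (N : ℝ) + 1) ^ d
      ≤ (α - (α - c) / 2) * ((1 - (α - c) / 2) * (2 * (N : ℝ) + 1) ^ d) := by
        rw [← mul_assoc]
        gcongr
        nlinarith
    _ ≤ (α - (α - c) / 2) * (2 * ((N - s : ℕ) : ℝ) + 1) ^ d := by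
        gcongr
        linarith
    _ ≤ cubeCount A (N - s) 0 := hA

lemma eventually_cubeCount_le {B : Set (Fin d → ℤ)} {c : ℝ} (hc : banachDensity d B < c) :
    ∀ᶠ n : ℕ in atTop, ∀ x, (cubeCount B n x : ℝ) ≤ c * (2 * (n : ℝ) + 1) ^ d := by
  have hbdd : IsBoundedUnder (· ≤ ·) atTop fun n : ℕ =>
      (⨆ x, (cubeCount B n x : ℝ)) / (2 * (n : ℝ) + 1) ^ d :=
    isBoundedUnder_of ⟨1, fun n =>
      div_le_one_of_le₀ (ciSup_le fun x => cubeCount_le_real B n x) (by positivity)⟩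
  filter_upwards [eventually_lt_of_limsup_lt hc hbdd] with n hn x
  rw [div_lt_iff₀ (by positivity)] at hn
  exact (le_ciSup ⟨_, Set.forall_mem_range.mpr fun x => cubeCount_le_real B n x⟩ x).trans hn.le

lemma frequently_lt_cubeCount {B : Set (Fin d → ℤ)} {c : ℝ} (hc : c < banachDensity d B) :
    ∃ᶠ n : ℕ in atTop, ∃ x, c * (2 * (n : ℝ) + 1) ^ d < cubeCount B n x := by
  have hbdd (n : ℕ) : BddAbove (Set.range fun x => (cubeCount B n x : ℝ)) :=
    ⟨_, Set.forall_mem_range.mpr fun x => cubeCount_le_real B n x⟩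
  have hcobdd : IsCoboundedUnder (· ≤ ·) atTop fun n : ℕ =>
      (⨆ x, (cubeCount B n x : ℝ)) / (2 * (n : ℝ) + 1) ^ d :=
    isCoboundedUnder_le_of_le atTop fun n =>
      div_nonneg ((Nat.cast_nonneg _).trans (le_ciSup (hbdd n) 0)) (by positivity)
  refine (frequently_lt_of_lt_limsup hcobdd hc).mono fun n hn => ?_
  rw [lt_div_iff₀ (by positivity)] at hn
  exact (lt_ciSup_iff (hbdd n)).mp hn

lemma exists_frequently_dense_add_cube {B : Set (Fin d → ℤ)} (hB : 0 < banachDensity d B)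
    {δ : ℝ} (hδ : 0 < δ) (hδ1 : δ ≤ 1) :
    ∃ m : ℕ, ∃ᶠ n : ℕ in atTop, ∃ x,
      (1 - δ) * (2 * (n : ℝ) + 1) ^ d ≤ cubeCount (B + cube d m) n x := by
  set β := banachDensity d B
  set η := β * δ / 4
  have hη : 0 < η := by positivity
  obtain ⟨r, hr⟩ := (eventually_cubeCount_le (B := B) (c := β + η) (by linarith)).exists
  refine ⟨2 * r, (tendsto_add_atTop_nat (2 * r)).frequently
    (((frequently_lt_cubeCount (B := B) (c := β - η) (by linarith)).and_eventually
      (eventually_one_sub_mul_pow_le d (2 * r) (half_pos hδ))).mono ?_)⟩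
  rintro n ⟨⟨x, hx⟩, hratio⟩
  refine ⟨x, ?_⟩
  set S := cellCenters x r B n
  set X := (2 * ((n + 2 * r : ℕ) : ℝ) + 1) ^ d
  have hupper : (cubeCount B n x : ℝ) ≤ S.card * (2 * (r : ℝ) + 1) ^ d * (β + η) := by
    calc (cubeCount B n x : ℝ) ≤ ∑ y ∈ S, (cubeCount B r y : ℝ) := by
          exact_mod_cast cubeCount_le_sum_cubeCount_cellCenters x r B n
      _ ≤ ∑ _y ∈ S, (β + η) * (2 * (r : ℝ) + 1) ^ d := Finset.sum_le_sum fun y _ => hr y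
      _ = S.card * (2 * (r : ℝ) + 1) ^ d * (β + η) := by
          rw [Finset.sum_const, nsmul_eq_mul]; ring
  have hcells : (S.card : ℝ) * (2 * (r : ℝ) + 1) ^ d ≤
      cubeCount (B + cube d (2 * r)) (n + 2 * r) x := by
    exact_mod_cast card_cellCenters_mul_le_cubeCount x r B n
  have hcoef : (1 - δ) * (β + η) ≤ (β - η) * (1 - δ / 2) := by
    simp only [η]; nlinarith [mul_nonneg hB.le (sq_nonneg δ)]
  have hβη : 0 ≤ β - η := by simp only [η]; nlinarith
  refine le_trans (le_of_mul_le_mul_right ?_ (show 0 < β + η by positivity)) hcells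
  calc (1 - δ) * X * (β + η) = (1 - δ) * (β + η) * X := by ring
    _ ≤ (β - η) * ((1 - δ / 2) * X) := by rw [← mul_assoc]; gcongr
    _ ≤ (β - η) * (2 * (n : ℝ) + 1) ^ d := by gcongr
    _ ≤ S.card * (2 * (r : ℝ) + 1) ^ d * (β + η) := hx.le.trans hupper

lemma cubeCount_le_of_not_subset_add {A C : Set (Fin d → ℤ)} {n k : ℕ} {x z : Fin d → ℤ}
    {δ : ℝ} (hδ : 0 ≤ δ) (hC : (1 - δ) * (2 * (n : ℝ) + 1) ^ d ≤ cubeCount C n x)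
    (hratio : (1 - δ) * (2 * ((n + k : ℕ) : ℝ) + 1) ^ d ≤ (2 * (n : ℝ) + 1) ^ d)
    (hz : ¬ cubeAt d k z ⊆ A + C) :
    (cubeCount A (n + k) (z - x) : ℝ) ≤ 2 * δ * (2 * ((n + k : ℕ) : ℝ) + 1) ^ d := by
  obtain ⟨y, hyz, hy⟩ := Set.not_subset.mp hz
  have hsub : cubeAt d n (y - x) ⊆ cubeAt d (n + k) (z - x) := by
    intro w hw
    rw [mem_cubeAt] at hw hyz ⊢
    intro i
    have := hw i; have := hyz i
    simp only [Pi.sub_apply] at *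
    push_cast
    omega
  have hgrow : (cubeCount A (n + k) (z - x) : ℝ) + (2 * (n : ℝ) + 1) ^ d ≤
      cubeCount A n (y - x) + (2 * ((n + k : ℕ) : ℝ) + 1) ^ d := by
    exact_mod_cast cubeCount_add_le_of_subset A hsub
  have hmiss : (cubeCount A n (y - x) : ℝ) + cubeCount C n x ≤ (2 * (n : ℝ) + 1) ^ d := by
    exact_mod_cast cubeCount_add_cubeCount_le_of_notMem_add hy n x
  have hmono : (2 * (n : ℝ) + 1) ^ d ≤ (2 * ((n + k : ℕ) : ℝ) + 1) ^ d := by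
    gcongr; exact_mod_cast Nat.le_add_right n k
  nlinarith [mul_le_mul_of_nonneg_left hmono hδ]

lemma cubeCount_mul_le_sum_cubeCount (A : Set (Fin d → ℤ)) {M V N₁ N : ℕ}
    {v : Fin d → ℤ} (hv : v ∈ cube d V) (hN : N₁ + M + V ≤ N) :
    cubeCount A N₁ 0 * (2 * M + 1) ^ d ≤ ∑ z ∈ cubeFinset N 0, cubeCount A M (z - v) := by
  classical
  set s := (cubeFinset N₁ 0).filter (· ∈ A)
  let r : (Fin d → ℤ) → (Fin d → ℤ) → Prop := fun a z => z ∈ cubeFinset M (a + v)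
  have habove : ∀ a ∈ s, ((cubeFinset N 0).bipartiteAbove r a).card = (2 * M + 1) ^ d := by
    intro a ha
    rw [Finset.bipartiteAbove, Finset.filter_mem_eq_inter, Finset.inter_eq_right.mpr,
      card_cubeFinset]
    intro w hw
    have ha' := mem_cubeFinset.mp (Finset.mem_filter.mp ha).1
    rw [mem_cubeFinset] at hw ⊢
    intro i
    have := hw i; have := ha' i; have := hv.1 i; have := hv.2 i
    simp only [Pi.add_apply, Pi.zero_apply] at *
    omega
  have hbelow : ∀ z ∈ cubeFinset N 0,
      (s.bipartiteBelow r z).card ≤ cubeCount A M (z - v) := by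
    refine fun z _ => card_le_cubeCount fun a ha => ?_
    obtain ⟨has, haz⟩ := Finset.mem_filter.mp ha
    refine ⟨(Finset.mem_filter.mp has).2, mem_cubeAt.mpr fun i => ?_⟩
    have := (mem_cubeFinset.mp haz) i
    simp only [Pi.add_apply, Pi.sub_apply] at *
    omega
  calc cubeCount A N₁ 0 * (2 * M + 1) ^ d
      = ∑ a ∈ s, ((cubeFinset N 0).bipartiteAbove r a).card := by
        rw [Finset.sum_congr rfl habove, Finset.sum_const, smul_eq_mul, cubeCount_eq_card_filter]
    _ = ∑ z ∈ cubeFinset N 0, (s.bipartiteBelow r z).card :=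
        Finset.sum_card_bipartiteAbove_eq_sum_card_bipartiteBelow r
    _ ≤ ∑ z ∈ cubeFinset N 0, cubeCount A M (z - v) := Finset.sum_le_sum hbelow

lemma cubeCount_le_cubeCount_add_of_sparse {A G : Set (Fin d → ℤ)} {M V N₁ N : ℕ}
    {v : Fin d → ℤ} {c : ℝ} (hc : 0 ≤ c) (hv : v ∈ cube d V) (hN : N₁ + M + V ≤ N)
    (hsparse : ∀ z ∉ G, (cubeCount A M (z - v) : ℝ) ≤ c * (2 * (M : ℝ) + 1) ^ d) :
    (cubeCount A N₁ 0 : ℝ) ≤ cubeCount G N 0 + c * (2 * (N : ℝ) + 1) ^ d := by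
  classical
  set X := (2 * (M : ℝ) + 1) ^ d
  have hpoint (z : Fin d → ℤ) :
      (cubeCount A M (z - v) : ℝ) ≤ X * ((if z ∈ G then 1 else 0) + c) := by
    split_ifs with hz
    · nlinarith [cubeCount_le_real A M (z - v), (by positivity : 0 ≤ X)]
    · simpa [mul_comm] using hsparse z hz
  have hcount : (cubeCount A N₁ 0 : ℝ) * X ≤
      ∑ z ∈ cubeFinset N 0, (cubeCount A M (z - v) : ℝ) := by
    have := cubeCount_mul_le_sum_cubeCount A hv hN
    simp only [X]
    exact_mod_cast this
  refine le_of_mul_le_mul_right ?_ (show 0 < X by positivity)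
  calc (cubeCount A N₁ 0 : ℝ) * X
      ≤ ∑ z ∈ cubeFinset N 0, X * ((if z ∈ G then 1 else 0) + c) :=
        hcount.trans (Finset.sum_le_sum fun z _ => hpoint z)
    _ = (cubeCount G N 0 + c * (2 * (N : ℝ) + 1) ^ d) * X := by
        rw [← Finset.mul_sum, Finset.sum_add_distrib, Finset.sum_boole, Finset.sum_const,
          card_cubeFinset, cubeCount_eq_card_filter, nsmul_eq_mul]
        push_cast
        ring

lemma sub_le_lowerDensity_of_sparse {A G : Set (Fin d → ℤ)} {M : ℕ} {v : Fin d → ℤ}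
    {c : ℝ} (hc : 0 ≤ c)
    (hsparse : ∀ z ∉ G, (cubeCount A M (z - v) : ℝ) ≤ c * (2 * (M : ℝ) + 1) ^ d) :
    lowerDensity d A - c ≤ lowerDensity d G := by
  obtain ⟨V, hv⟩ := exists_mem_cube v
  refine le_of_forall_pos_le_add fun η hη => sub_le_iff_le_add.mp ?_
  refine le_lowerDensity_of_eventually ?_
  filter_upwards [eventually_mul_le_cubeCount_sub (A := A) (c := lowerDensity d A - η)
    (by linarith) (M + V), eventually_ge_atTop (M + V)] with N hA hN
  have hsplit :=
    cubeCount_le_cubeCount_add_of_sparse (N₁ := N - (M + V)) (N := N) hc hv (by omega) hsparse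
  linarith

end LatticeCube

open LatticeCube in
theorem stmt_2_general (d : ℕ) (A B : Set (Fin d → ℤ)) (α : ℝ)
    (hA : lowerDensity d A = α) (hB : 0 < banachDensity d B) :
    ∀ ε : ℝ, 0 < ε → ∃ m : ℕ, ∀ k : ℕ,
      α - ε ≤ lowerDensity d {z : Fin d → ℤ | cubeAt d k z ⊆ A + B + cube d m} := by
  intro ε hε
  set δ := min (ε / 2) 1
  have hδ : 0 < δ := lt_min (half_pos hε) one_pos
  obtain ⟨m, hdense⟩ := exists_frequently_dense_add_cube hB hδ (min_le_right _ _)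
  refine ⟨m, fun k => ?_⟩
  obtain ⟨n, ⟨x, hx⟩, hratio⟩ :=
    (hdense.and_eventually (eventually_one_sub_mul_pow_le d k hδ)).exists
  have hsparse : ∀ z ∉ {z | cubeAt d k z ⊆ A + B + cube d m},
      (cubeCount A (n + k) (z - x) : ℝ) ≤ 2 * δ * (2 * ((n + k : ℕ) : ℝ) + 1) ^ d :=
    fun z hz => cubeCount_le_of_not_subset_add hδ.le hx hratio (by rwa [add_assoc] at hz)
  have hG := sub_le_lowerDensity_of_sparse (by positivity) hsparse
  have : δ ≤ ε / 2 := min_le_left _ _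
  linarith

theorem stmt_2 (d : ℕ) (hd : 1 ≤ d) (A B : Set (Fin d → ℤ)) (α : ℝ)
    (hA : lowerDensity d A = α) (hα : 0 < α) (hB : 0 < banachDensity d B) :
    ∀ ε : ℝ, 0 < ε → ∃ m : ℕ, ∀ k : ℕ,
      α - ε ≤ lowerDensity d {z : Fin d → ℤ | cubeAt d k z ⊆ A + B + cube d m} :=
  stmt_2_general d A B α hA hB
end

section
/- Suppose m ∈ ℕ, X is a finite set, and (T_i)_{i<n} is a finite collection of subsets of X such that for every x ∈ X, 1 ≤ Σ_{i<n} χ_{T_i}(x) ≤ m, where χ_{T_i} is the characteristic function of T_i. If t ∈ (0,1) and E ⊆ X satisfies |T_i ∩ E| / |T_i| ≤ t for every i < n, then |E| / |X| ≤ m·t / (1 + (m−1)·t). -/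
/-!
Double counting: with `c x` the number of sets `T i` containing `x`, the density bound gives
`∑_{x ∈ E} c x = ∑ᵢ |Tᵢ ∩ E| ≤ t ∑ᵢ |Tᵢ| = t ∑_{x ∈ X} c x`, i.e.
`(1 - t) ∑_{E} c ≤ t ∑_{X \ E} c`. Since `c ≥ 1` on `E` and `c ≤ m` on `X \ E`, this yields
`(1 - t) |E| ≤ m t (|X| - |E|)`, which rearranges to the claim.
-/

open Finset

section DoubleCounting

variable {ι α : Type*} [Fintype ι] [DecidableEq α]

theorem sum_card_inter_eq_sum_multiplicity (T : ι → Finset α) (S : Finset α) :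
    ∑ i, #(T i ∩ S) = ∑ x ∈ S, ∑ i, if x ∈ T i then 1 else 0 := by
  simp only [inter_comm (T _), ← filter_mem_eq_inter, card_filter]
  exact sum_comm

theorem sum_multiplicity_le_of_density_le {T : ι → Finset α} {X E : Finset α}
    (hTX : ∀ i, T i ⊆ X) {t : ℝ} (hdensity : ∀ i, (#(T i ∩ E) : ℝ) ≤ t * #(T i)) :
    ∑ x ∈ E, (∑ i, if x ∈ T i then 1 else 0 : ℝ) ≤ t * ∑ x ∈ X, ∑ i, if x ∈ T i then 1 else 0 := by
  have hT : ∀ i, T i = T i ∩ X := fun i => (inter_eq_left.mpr (hTX i)).symm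
  have key := fun S => congrArg (Nat.cast (R := ℝ)) (sum_card_inter_eq_sum_multiplicity T S)
  push_cast at key
  rw [← key, ← key, mul_sum]
  exact sum_le_sum fun i _ => hT i ▸ hdensity i

end DoubleCounting

theorem card_mul_le_of_weighted_sum_le {α : Type*} [DecidableEq α] {X E : Finset α}
    (hE : E ⊆ X) (c : α → ℝ) {m t : ℝ} (ht₀ : 0 ≤ t) (ht₁ : t ≤ 1)
    (hc_ge : ∀ x ∈ E, 1 ≤ c x) (hc_le : ∀ x ∈ X \ E, c x ≤ m)
    (hsum : ∑ x ∈ E, c x ≤ t * ∑ x ∈ X, c x) :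
    (#E : ℝ) * (1 + (m - 1) * t) ≤ m * t * #X := by
  have hsplit : ∑ x ∈ X, c x = ∑ x ∈ X \ E, c x + ∑ x ∈ E, c x := (sum_sdiff hE).symm
  have hE_le : (#E : ℝ) ≤ ∑ x ∈ E, c x := by
    simpa using sum_le_sum hc_ge
  have hcompl_le : ∑ x ∈ X \ E, c x ≤ m * (#X - #E) := by
    have := sum_le_sum hc_le
    rwa [sum_const, card_sdiff_of_subset hE, nsmul_eq_mul, Nat.cast_sub (card_le_card hE),
      mul_comm] at this
  nlinarith [mul_le_mul_of_nonneg_left hE_le (sub_nonneg.mpr ht₁),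
    mul_le_mul_of_nonneg_left hcompl_le ht₀]

theorem stmt_8_general {α : Type*} [DecidableEq α] (m n : ℕ) (X : Finset α)
    (T : Fin n → Finset α) (hTX : ∀ i, T i ⊆ X)
    (hcover : ∀ x ∈ X,
      1 ≤ ∑ i : Fin n, (if x ∈ T i then 1 else 0) ∧
      ∑ i : Fin n, (if x ∈ T i then 1 else 0) ≤ m)
    (t : ℝ) (ht : t ∈ Set.Ioo (0 : ℝ) 1) (E : Finset α) (hE : E ⊆ X)
    (hcount : ∀ i, ((T i ∩ E).card : ℝ) / (T i).card ≤ t) :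
    (E.card : ℝ) / X.card ≤ (m : ℝ) * t / (1 + ((m : ℝ) - 1) * t) := by
  obtain ⟨ht₀, ht₁⟩ := ht
  -- an empty `T i` makes `hcount i` a junk statement `0 / 0 ≤ t`, but then `T i ∩ E` is empty too
  have hdensity : ∀ i, (#(T i ∩ E) : ℝ) ≤ t * #(T i) := fun i => by
    rcases (#(T i)).eq_zero_or_pos with h | h
    · simp [card_eq_zero.mp h]
    · exact (div_le_iff₀ (by exact_mod_cast h)).mp (hcount i)
  have hmain := card_mul_le_of_weighted_sum_le hE (fun x => ∑ i, if x ∈ T i then 1 else 0)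
    (m := m) ht₀.le ht₁.le
    (fun x hx => by exact_mod_cast (hcover x (hE hx)).1)
    (fun x hx => by exact_mod_cast (hcover x (mem_sdiff.mp hx).1).2)
    (sum_multiplicity_le_of_density_le hTX hdensity)
  have hdenom : (0 : ℝ) < 1 + ((m : ℝ) - 1) * t := by nlinarith
  rcases (#X).eq_zero_or_pos with hX | hX
  · rw [hX, Nat.cast_zero, div_zero]
    positivity
  · rwa [div_le_div_iff₀ (by exact_mod_cast hX) hdenom]

theorem stmt_8 {α : Type*} [DecidableEq α] (m n : ℕ) (X : Finset α)
    (T : Fin n → Finset α) (hTX : ∀ i, T i ⊆ X) (hTne : ∀ i, (T i).Nonempty)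
    (hcover : ∀ x ∈ X,
      1 ≤ ∑ i : Fin n, (if x ∈ T i then 1 else 0) ∧
      ∑ i : Fin n, (if x ∈ T i then 1 else 0) ≤ m)
    (t : ℝ) (ht : t ∈ Set.Ioo (0 : ℝ) 1) (E : Finset α) (hE : E ⊆ X)
    (hcount : ∀ i, ((T i ∩ E).card : ℝ) / (T i).card ≤ t) :
    (E.card : ℝ) / X.card ≤ (m : ℝ) * t / (1 + ((m : ℝ) - 1) * t) :=
  stmt_8_general m n X T hTX hcover t ht E hE hcount
end

section
/- There exist sets A, B ⊆ ℕ such that the lower density of A equals 1/2, the Banach density of B is at least 8/9, and for every m ∈ ℕ there exists k ∈ ℕ such that the lower density of {x ∈ ℕ : [x, x+k] ⊆ A + B + [0,m]} is strictly less than 1/2. -/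
open Filter Pointwise

/-- Lower asymptotic density of a set of (positive) natural numbers,
computed on the initial segments `[1, n]`. -/
noncomputable def lowerDensityNat (A : Set ℕ) : ℝ :=
  liminf (fun n : ℕ => (Set.ncard (A ∩ Set.Icc 1 n) : ℝ) / n) atTop

/-- (Upper) Banach density of a set of natural numbers: the limit over `n` of
`sup_x |A ∩ [x+1, x+n]| / n`, expressed as a `limsup` (the limit exists). -/
noncomputable def banachDensityNat (A : Set ℕ) : ℝ :=
  limsup (fun n : ℕ =>
    (⨆ x : ℕ, (Set.ncard (A ∩ Set.Icc (x + 1) (x + n)) : ℝ)) / n) atTop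

/-!
Write `P m = 9 ^ 9 ^ m`. Outside a very sparse sequence of blocks `(l_j, r_j]`, `A` contains
everything; inside block `j` it contains only the multiples of `p = P (level j)`, where
`l_j = (p - 2) H`, `r_j = l_j + p H` and `H = P j ^ 3`. Thus exactly half of `[1, r_j]` lies
in `A`, and since the blocks are far apart the proportion never drops much below `1/2`.

`B` lives in the windows `P (i + 1) + (0, P i]`, and for each `1 ≤ m ≤ i` it avoids the top
`P m / 9 ^ (m + 1)` residues modulo `P m`, which costs less than a ninth of each window. Below
`r_j` all elements of `B` are at most `2 P j`, negligible against the block; so if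
`level j = m + 1`, an element `a + b + t` (`t ≤ m`) of the upper part of the block has
`P (m + 1) ∣ a`, while `b + t` never reaches the residue `-1` modulo `P (m + 1)`. Hence no
interval of length `P (m + 1)` in that part of the block lies in `A + B + [0, m]`, which pushes
the proportion of left ends of such intervals in `[1, r_j]` below `1/2 - 1 / (4 P (m + 1))`;
and every `m + 1` is the level of infinitely many blocks.
-/

open Finset

lemma ncard_inter_Icc_eq_card_filter (S : Set ℕ) [DecidablePred (· ∈ S)] (n : ℕ) :
    (S ∩ Set.Icc 1 n).ncard = #{x ∈ Ioc 0 n | x ∈ S} := by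
  rw [← Set.ncard_coe_finset, coe_filter]
  congr 1
  ext x
  simp only [Set.mem_inter_iff, Set.mem_Icc, mem_Ioc, Set.mem_ofPred_eq, Nat.lt_iff_add_one_le,
    zero_add]
  exact and_comm

lemma ncard_inter_Icc_add_le (S : Set ℕ) (x n : ℕ) :
    (S ∩ Set.Icc (x + 1) (x + n)).ncard ≤ n :=
  (Set.ncard_le_ncard Set.inter_subset_right (Set.finite_Icc _ _)).trans
    (by rw [Set.ncard_eq_toFinset_card', Set.toFinset_Icc, Nat.card_Icc]; omega)

lemma lowerDensityNat_le_of_frequently {A : Set ℕ} {c : ℝ}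
    (h : ∃ᶠ n in atTop, ((A ∩ Set.Icc 1 n).ncard : ℝ) ≤ c * n) : lowerDensityNat A ≤ c := by
  refine liminf_le_of_frequently_le ?_ (isBoundedUnder_of ⟨0, fun n => by positivity⟩)
  refine (h.and_eventually (eventually_gt_atTop 0)).mono fun n ⟨hn, hn0⟩ => ?_
  rwa [div_le_iff₀ (by positivity)]

lemma le_lowerDensityNat_of_eventually {A : Set ℕ} {c : ℝ}
    (h : ∀ ε > 0, ∀ᶠ n in atTop, (c - ε) * n ≤ (A ∩ Set.Icc 1 n).ncard) :
    c ≤ lowerDensityNat A := by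
  have hle : ∀ n : ℕ, ((A ∩ Set.Icc 1 n).ncard : ℝ) / n ≤ 1 := fun n =>
    div_le_one_of_le₀ (by exact_mod_cast ncard_inter_Icc_add_le A 0 n |>.trans_eq' (by simp))
      n.cast_nonneg
  refine le_of_forall_sub_le fun ε hε => le_liminf_of_le
    (isBoundedUnder_of ⟨1, hle⟩).isCoboundedUnder_ge ?_
  refine ((h ε hε).and (eventually_gt_atTop 0)).mono fun n ⟨hn, hn0⟩ => ?_
  rwa [le_div_iff₀ (by positivity)]

lemma le_banachDensityNat_of_frequently {B : Set ℕ} {c : ℝ}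
    (h : ∃ᶠ n in atTop, ∃ x, c * n ≤ (B ∩ Set.Icc (x + 1) (x + n)).ncard) :
    c ≤ banachDensityNat B := by
  have hbdd : ∀ n : ℕ, BddAbove (Set.range fun x => ((B ∩ Set.Icc (x + 1) (x + n)).ncard : ℝ)) :=
    fun n => ⟨n, by rintro _ ⟨x, rfl⟩; dsimp only; exact_mod_cast ncard_inter_Icc_add_le B x n⟩
  have hle : ∀ n : ℕ, (⨆ x : ℕ, ((B ∩ Set.Icc (x + 1) (x + n)).ncard : ℝ)) / n ≤ 1 := fun n =>
    div_le_one_of_le₀ (ciSup_le fun x => by exact_mod_cast ncard_inter_Icc_add_le B x n)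
      n.cast_nonneg
  refine le_limsup_of_frequently_le ?_ (isBoundedUnder_of ⟨1, hle⟩)
  refine (h.and_eventually (eventually_gt_atTop 0)).mono fun n ⟨⟨x, hx⟩, hn0⟩ => ?_
  rw [le_div_iff₀ (by positivity)]
  exact hx.trans (le_ciSup (hbdd n) x)

lemma exists_le_lt_succ_of_strictMono {f : ℕ → ℕ} (hf : StrictMono f) {s₀ N : ℕ}
    (h : f s₀ ≤ N) : ∃ s, s₀ ≤ s ∧ f s ≤ N ∧ N < f (s + 1) := by
  have hex : ∃ t, N < f t := ⟨N + 1, N.lt_succ_self.trans_le (hf.id_le _)⟩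
  have hlt : s₀ < Nat.find hex := by
    by_contra! hle
    exact (Nat.find_spec hex).not_ge ((hf.monotone hle).trans h)
  refine ⟨Nat.find hex - 1, by omega, not_lt.mp (Nat.find_min hex (by omega)), ?_⟩
  rw [Nat.sub_add_cancel (by omega)]
  exact Nat.find_spec hex

lemma Nat.exists_mem_Ico_mod_eq {k r : ℕ} (hr : r < k) (x : ℕ) :
    ∃ z ∈ Ico x (x + k), z % k = r := by
  have hdiv := Nat.div_add_mod x k
  have hmod := Nat.mod_lt x (r.zero_le.trans_lt hr)
  by_cases hxr : x % k ≤ r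
  · refine ⟨k * (x / k) + r, mem_Ico.mpr ⟨by omega, by omega⟩, ?_⟩
    rw [Nat.mul_add_mod, Nat.mod_eq_of_lt hr]
  · have : k * (x / k + 1) = k * (x / k) + k := Nat.mul_succ _ _
    refine ⟨k * (x / k + 1) + r, mem_Ico.mpr ⟨by omega, by omega⟩, ?_⟩
    rw [Nat.mul_add_mod, Nat.mod_eq_of_lt hr]

lemma Nat.card_filter_dvd_Ioc (p : ℕ) {a b : ℕ} (hab : a ≤ b) :
    #{x ∈ Ioc a b | p ∣ x} = b / p - a / p := by
  have hunion : Ioc 0 b = Ioc 0 a ∪ Ioc a b := (Ioc_union_Ioc_eq_Ioc a.zero_le hab).symm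
  have := Ioc_filter_dvd_card_eq_div b p
  rw [hunion, filter_union, card_union_of_disjoint
    (disjoint_filter_filter (Ioc_disjoint_Ioc_of_le le_rfl)), Ioc_filter_dvd_card_eq_div] at this
  omega

lemma Nat.card_filter_le_mod_Ioc_le {p g : ℕ} (hg : g < p) (K : ℕ) :
    #{w ∈ Ioc 0 (p * K) | p - g ≤ w % p} ≤ K * g := by
  have hmaps : ∀ w ∈ ({w ∈ Ioc 0 (p * K) | p - g ≤ w % p} : Finset ℕ),
      (w / p, w % p) ∈ range K ×ˢ Ico (p - g) p := by
    intro w hw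
    simp only [mem_filter, mem_Ioc] at hw
    have hwK : w < p * K := lt_of_le_of_ne hw.1.2 fun h => by
      rw [h, Nat.mul_mod_right] at hw; omega
    simp only [mem_product, mem_range, mem_Ico]
    exact ⟨Nat.div_lt_of_lt_mul hwK, hw.2, Nat.mod_lt _ (by omega)⟩
  have hinj : Set.InjOn (fun w => (w / p, w % p))
      ({w ∈ Ioc 0 (p * K) | p - g ≤ w % p} : Finset ℕ) := fun a _ b _ h => by
    simp only [Prod.mk.injEq] at h
    rw [← Nat.div_add_mod a p, ← Nat.div_add_mod b p, h.1, h.2]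
  calc _ ≤ #(range K ×ˢ Ico (p - g) p) := card_le_card_of_injOn _ hmaps hinj
    _ = K * g := by rw [card_product, card_range, Nat.card_Ico]; congr 1; omega

lemma Nat.le_add_two_mul_div_of_le_mul {x H D : ℕ} (hx : 2 ≤ x) (hD : D ≤ x * H) :
    D ≤ (x - 2) * H + 2 * (D / x) + 1 := by
  obtain ⟨u, rfl⟩ : ∃ u, x = u + 2 := ⟨x - 2, by omega⟩
  have hdiv := Nat.div_add_mod D (u + 2)
  have hmod := Nat.mod_lt D (show 0 < u + 2 by omega)
  simp only [Nat.add_sub_cancel]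
  rcases lt_or_ge (D / (u + 2)) H with hq | hq <;> nlinarith

namespace Counterexample

def modulus (m : ℕ) : ℕ := 9 ^ 9 ^ m

def gap (m : ℕ) : ℕ := 9 ^ (9 ^ m - m - 1)

/-- Takes every value `m + 1` for infinitely many `j` (see `level_pair`); the cap at `j` keeps
`modulus (level j) ≤ modulus j`. -/
def level (j : ℕ) : ℕ := min ((Nat.unpair j).1 + 1) j

def blockStart (j : ℕ) : ℕ := (modulus (level j) - 2) * modulus j ^ 3

def blockEnd (j : ℕ) : ℕ := blockStart j + modulus (level j) * modulus j ^ 3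

def A : Set ℕ := {a | ∀ j, blockStart j < a → a ≤ blockEnd j → modulus (level j) ∣ a}

def goodOffsets (i : ℕ) : Finset ℕ :=
  {w ∈ Ioc 0 (modulus i) | ∀ m ∈ Icc (1 : ℕ) i, w % modulus m < modulus m - gap m}

def B : Set ℕ := {b | ∃ i, ∃ w ∈ goodOffsets i, b = modulus (i + 1) + w}

lemma modulus_succ (m : ℕ) : modulus (m + 1) = modulus m ^ 9 := by
  rw [modulus, modulus, pow_succ, pow_mul]

lemma modulus_strictMono : StrictMono modulus := fun _ _ h =>
  Nat.pow_lt_pow_right (by norm_num) (Nat.pow_lt_pow_right (by norm_num) h)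

lemma modulus_mono : Monotone modulus := modulus_strictMono.monotone

lemma nine_le_modulus (m : ℕ) : 9 ≤ modulus m :=
  (modulus_mono m.zero_le).trans_eq' rfl

lemma lt_modulus (m : ℕ) : m < modulus m :=
  (Nat.lt_pow_self (by norm_num)).trans
    (Nat.pow_lt_pow_right (by norm_num) (Nat.lt_pow_self (by norm_num)))

lemma modulus_dvd_modulus {m n : ℕ} (h : m ≤ n) : modulus m ∣ modulus n :=
  pow_dvd_pow _ (Nat.pow_le_pow_right (by norm_num) h)

lemma two_mul_modulus_add_lt (m : ℕ) : 2 * modulus m + m + 1 < modulus (m + 1) := by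
  have h9 := nine_le_modulus m
  have hm := lt_modulus m
  have : 9 * modulus m ≤ modulus m ^ 9 :=
    calc 9 * modulus m ≤ modulus m ^ 8 * modulus m :=
          Nat.mul_le_mul_right _ (h9.trans (Nat.le_self_pow (by norm_num) _))
      _ = modulus m ^ 9 := by ring
  rw [modulus_succ]
  omega

lemma add_two_le_gap (m : ℕ) : m + 2 ≤ gap (m + 1) := by
  have h1 : m + 1 < 9 ^ (m + 1) := Nat.lt_pow_self (by norm_num)
  have h2 : 9 ^ (m + 1) - (m + 1) - 1 < gap (m + 1) := Nat.lt_pow_self (by norm_num)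
  have h3 : 9 * (m + 1) ≤ 9 ^ (m + 1) := by
    rw [pow_succ']; exact Nat.mul_le_mul_left _ (Nat.lt_pow_self (by norm_num))
  omega

lemma gap_lt_modulus (m : ℕ) : gap m < modulus m :=
  Nat.pow_lt_pow_right (by norm_num) (by have := Nat.one_le_pow m 9 (by norm_num); omega)

lemma modulus_div_mul_gap {m i : ℕ} (h : m ≤ i) :
    modulus i / modulus m * gap m = 9 ^ (9 ^ i - m - 1) := by
  have h1 : m < 9 ^ m := Nat.lt_pow_self (by norm_num)
  have h2 : 9 ^ m ≤ 9 ^ i := Nat.pow_le_pow_right (by norm_num) h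
  rw [modulus, modulus, Nat.pow_div h2 (by norm_num), gap, ← pow_add]
  congr 1
  omega

lemma modulus_level_le (j : ℕ) : modulus (level j) ≤ modulus j :=
  modulus_mono (min_le_right _ _)

lemma level_pair {m y : ℕ} (h : m < y) : level (Nat.pair m y) = m + 1 := by
  have := Nat.right_le_pair m y
  rw [level, Nat.unpair_pair]
  omega

lemma two_mul_blockStart_add (j : ℕ) : 2 * (blockStart j + modulus j ^ 3) = blockEnd j := by
  have := nine_le_modulus (level j)
  obtain ⟨u, hu⟩ : ∃ u, modulus (level j) = u + 2 := ⟨_, (Nat.sub_add_cancel (by omega)).symm⟩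
  rw [blockEnd, blockStart, hu, Nat.add_sub_cancel]
  ring

lemma blockStart_lt_blockEnd (j : ℕ) : blockStart j < blockEnd j :=
  Nat.lt_add_of_pos_right (Nat.mul_pos (by have := nine_le_modulus (level j); omega)
    (pow_pos (by have := nine_le_modulus j; omega) _))

lemma le_blockStart (j : ℕ) : modulus j ^ 3 ≤ blockStart j :=
  Nat.le_mul_of_pos_left _ (by have := nine_le_modulus (level j); omega)

lemma le_blockEnd (j : ℕ) : j ≤ blockEnd j := by
  have := lt_modulus j
  have := Nat.le_self_pow (by norm_num : 3 ≠ 0) (modulus j)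
  have := le_blockStart j
  have := blockStart_lt_blockEnd j
  omega

lemma blockEnd_add_one_le_modulus (j : ℕ) : blockEnd j + 1 ≤ modulus (j + 1) := by
  rw [modulus_succ]
  set y := modulus j
  have hy := nine_le_modulus j
  have hend : blockEnd j ≤ 2 * y ^ 4 := by
    have := modulus_level_le j
    rw [← two_mul_blockStart_add, blockStart]
    have : (modulus (level j) - 2) * y ^ 3 + y ^ 3 ≤ y * y ^ 3 := by
      rw [← Nat.succ_mul]; exact Nat.mul_le_mul_right _ (by omega)
    nlinarith
  have : 2 * y ^ 4 + 1 ≤ y ^ 9 := by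
    have : 3 * y ^ 4 ≤ y ^ 5 * y ^ 4 :=
      Nat.mul_le_mul_right _ ((by omega : 3 ≤ y).trans (Nat.le_self_pow (by norm_num) _))
    have : 1 ≤ y ^ 4 := Nat.one_le_pow _ _ (by omega)
    nlinarith
  omega

lemma blockEnd_add_one_mul_le (j : ℕ) :
    (blockEnd j + 1) * modulus (j + 1) ≤ blockStart (j + 1) :=
  calc (blockEnd j + 1) * modulus (j + 1) ≤ modulus (j + 1) ^ 2 := by
        rw [sq]; exact Nat.mul_le_mul_right _ (blockEnd_add_one_le_modulus j)
    _ ≤ modulus (j + 1) ^ 3 := Nat.pow_le_pow_right (by have := nine_le_modulus (j + 1); omega)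
        (by norm_num)
    _ ≤ blockStart (j + 1) := le_blockStart _

lemma blockEnd_lt_blockStart_succ (j : ℕ) : blockEnd j < blockStart (j + 1) := by
  have := blockEnd_add_one_mul_le j
  have := nine_le_modulus (j + 1)
  nlinarith

lemma blockStart_strictMono : StrictMono blockStart :=
  strictMono_nat_of_lt_succ fun j =>
    (blockStart_lt_blockEnd j).trans (blockEnd_lt_blockStart_succ j)

lemma blockEnd_strictMono : StrictMono blockEnd :=
  strictMono_nat_of_lt_succ fun j =>
    (blockEnd_lt_blockStart_succ j).trans (blockStart_lt_blockEnd (j + 1))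

open scoped Classical in
lemma two_mul_card_A_le (j : ℕ) : 2 * #{x ∈ Ioc 0 (blockEnd j) | x ∈ A} ≤ blockEnd j := by
  have hsub : {x ∈ Ioc 0 (blockEnd j) | x ∈ A} ⊆
      Ioc 0 (blockStart j) ∪ {x ∈ Ioc (blockStart j) (blockEnd j) | modulus (level j) ∣ x} := by
    intro x hx
    simp only [mem_filter, mem_Ioc, mem_union] at hx ⊢
    by_cases h : x ≤ blockStart j
    · exact Or.inl ⟨hx.1.1, h⟩
    · exact Or.inr ⟨⟨by omega, hx.1.2⟩, hx.2 j (by omega) hx.1.2⟩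
  have hmult : #{x ∈ Ioc (blockStart j) (blockEnd j) | modulus (level j) ∣ x} =
      modulus j ^ 3 := by
    rw [Nat.card_filter_dvd_Ioc _ (blockStart_lt_blockEnd j).le, blockEnd,
      Nat.add_mul_div_left _ _ (by have := nine_le_modulus (level j); omega),
      Nat.add_sub_cancel_left]
  calc 2 * #{x ∈ Ioc 0 (blockEnd j) | x ∈ A} ≤ 2 * (blockStart j + modulus j ^ 3) := by
        have := (card_le_card hsub).trans (card_union_le _ _)
        rw [Nat.card_Ioc, hmult] at this
        omega
    _ = blockEnd j := two_mul_blockStart_add j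

open scoped Classical in
lemma le_two_mul_card_A {s N : ℕ} (hl : blockStart (s + 1) ≤ N) (hN : N < blockStart (s + 2)) :
    N ≤ 2 * #{x ∈ Ioc 0 N | x ∈ A} + 2 * blockEnd s + 1 := by
  set l := blockStart (s + 1)
  set P := modulus (level (s + 1))
  set M := min N (blockEnd (s + 1))
  have hsub : {x ∈ Ioc 0 N | x ∉ A} ⊆ Ioc 0 (blockEnd s) ∪ {x ∈ Ioc l M | ¬ P ∣ x} := by
    intro x hx
    simp only [A, mem_filter, mem_Ioc, mem_union, Set.mem_ofPred_eq, not_forall] at hx ⊢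
    obtain ⟨⟨hx0, hxN⟩, j, hlj, hjr, hdvd⟩ := hx
    rcases lt_trichotomy j (s + 1) with hj | rfl | hj
    · exact Or.inl ⟨hx0, hjr.trans (blockEnd_strictMono.monotone (by omega))⟩
    · exact Or.inr ⟨⟨hlj, le_min hxN hjr⟩, hdvd⟩
    · have := blockStart_strictMono.monotone (show s + 2 ≤ j by omega)
      omega
  have hlM : l ≤ M := le_min hl (blockStart_lt_blockEnd _).le
  have hP : 2 ≤ P := by have := nine_le_modulus (level (s + 1)); omega
  have hnon : #{x ∈ Ioc l M | ¬ P ∣ x} + (M / P - l / P) = M - l := by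
    rw [← Nat.card_filter_dvd_Ioc P hlM, ← Nat.card_Ioc l M, add_comm]
    exact card_filter_add_card_filter_not _
  have hdiv : l / P + (M - l) / P ≤ M / P := by
    have : l / P + (M - l) / P ≤ (l + (M - l)) / P := Nat.div_add_div_le_add_div
    rwa [Nat.add_sub_cancel' hlM] at this
  have hMl : M - l ≤ P * modulus (s + 1) ^ 3 := by
    have : M ≤ l + P * modulus (s + 1) ^ 3 := min_le_right _ _
    omega
  have hkey : M - l ≤ l + 2 * ((M - l) / P) + 1 := Nat.le_add_two_mul_div_of_le_mul hP hMl
  have hbad := (card_le_card hsub).trans (card_union_le _ _)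
  have hsplit := card_filter_add_card_filter_not (s := Ioc 0 N) (· ∈ A)
  rw [Nat.card_Ioc] at hbad hsplit
  have : M ≤ N := min_le_left _ _
  omega

lemma lowerDensityNat_A : lowerDensityNat A = 1 / 2 := by
  classical
  refine le_antisymm (lowerDensityNat_le_of_frequently ?_)
    (le_lowerDensityNat_of_eventually fun ε hε => ?_)
  · refine (tendsto_atTop_mono le_blockEnd tendsto_id).frequently
      (Frequently.of_forall fun j => ?_)
    rw [ncard_inter_Icc_eq_card_filter]
    have : (2 * #{x ∈ Ioc 0 (blockEnd j) | x ∈ A} : ℝ) ≤ blockEnd j := by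
      exact_mod_cast two_mul_card_A_le j
    linarith
  · obtain ⟨n, hn⟩ := exists_nat_gt ε⁻¹
    filter_upwards [eventually_ge_atTop (blockStart (n + 1))] with N hN
    obtain ⟨s, hns, hsN, hNs⟩ := exists_le_lt_succ_of_strictMono
      (f := fun s => blockStart (s + 1)) (fun _ _ h => blockStart_strictMono (by omega)) hN
    have hcount : (N : ℝ) ≤ 2 * #{x ∈ Ioc 0 N | x ∈ A} + 2 * (blockEnd s + 1) := by
      exact_mod_cast (le_two_mul_card_A hsN hNs).trans (by omega)
    have hblock : ((blockEnd s + 1 : ℕ) : ℝ) * modulus (s + 1) ≤ N := by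
      exact_mod_cast (blockEnd_add_one_mul_le s).trans hsN
    have hmod : 1 ≤ ε * modulus (s + 1) := by
      have : (n : ℝ) < modulus (s + 1) := by
        exact_mod_cast (show n < s + 1 by omega).trans (lt_modulus _)
      rw [inv_lt_iff_one_lt_mul₀ hε] at hn
      nlinarith
    rw [ncard_inter_Icc_eq_card_filter]
    push_cast at hblock
    nlinarith [mul_le_mul_of_nonneg_left hmod (by positivity : (0 : ℝ) ≤ blockEnd s + 1)]

lemma eight_mul_modulus_le_nine_mul_card_goodOffsets (i : ℕ) :
    8 * modulus i ≤ 9 * #(goodOffsets i) := by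
  set E := 9 ^ i
  have hiE : i < E := Nat.lt_pow_self (by norm_num)
  have hbad : ∀ m ∈ Icc (1 : ℕ) i,
      #{w ∈ Ioc 0 (modulus i) | modulus m - gap m ≤ w % modulus m} ≤ 9 ^ (E - m - 1) := by
    intro m hm
    have hmi := (mem_Icc.1 hm).2
    have := Nat.card_filter_le_mod_Ioc_le (gap_lt_modulus m) (modulus i / modulus m)
    rwa [Nat.mul_div_cancel' (modulus_dvd_modulus hmi), modulus_div_mul_gap hmi] at this
  have hsum : ∑ m ∈ Icc (1 : ℕ) i, 9 ^ (E - m - 1) < 9 ^ (E - 1) := by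
    rw [← sum_image (g := fun m => E - m - 1) fun a ha b hb h => by
      simp only [coe_Icc, Set.mem_Icc] at ha hb h; omega]
    exact Nat.geomSum_lt (by norm_num) fun k hk => by
      obtain ⟨m, hm, rfl⟩ := mem_image.1 hk
      rw [mem_Icc] at hm
      omega
  have hnot : #{w ∈ Ioc 0 (modulus i) |
      ¬ ∀ m ∈ Icc (1 : ℕ) i, w % modulus m < modulus m - gap m} < 9 ^ (E - 1) :=
    calc _ ≤ #((Icc (1 : ℕ) i).biUnion fun m =>
          {w ∈ Ioc 0 (modulus i) | modulus m - gap m ≤ w % modulus m}) := by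
          refine card_le_card fun w hw => ?_
          simp only [mem_filter, not_forall, not_lt, mem_biUnion] at hw ⊢
          obtain ⟨hw, m, hm, hle⟩ := hw
          exact ⟨m, hm, hw, hle⟩
      _ ≤ ∑ m ∈ Icc (1 : ℕ) i, #{w ∈ Ioc 0 (modulus i) | modulus m - gap m ≤ w % modulus m} :=
          card_biUnion_le
      _ ≤ ∑ m ∈ Icc (1 : ℕ) i, 9 ^ (E - m - 1) := sum_le_sum hbad
      _ < 9 ^ (E - 1) := hsum
  have hsplit := card_filter_add_card_filter_not (s := Ioc 0 (modulus i))
    fun w => ∀ m ∈ Icc (1 : ℕ) i, w % modulus m < modulus m - gap m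
  have hmod : modulus i = 9 * 9 ^ (E - 1) := by
    rw [modulus, ← pow_succ']
    congr 1
    omega
  rw [Nat.card_Ioc] at hsplit
  rw [goodOffsets]
  omega

lemma banachDensityNat_B : 8 / 9 ≤ banachDensityNat B := by
  refine le_banachDensityNat_of_frequently <| modulus_strictMono.tendsto_atTop.frequently
    (Frequently.of_forall fun i => ⟨modulus (i + 1), ?_⟩)
  have hsub : (modulus (i + 1) + ·) '' (goodOffsets i : Set ℕ) ⊆
      B ∩ Set.Icc (modulus (i + 1) + 1) (modulus (i + 1) + modulus i) := by
    rintro _ ⟨w, hw, rfl⟩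
    dsimp only
    have hw' := mem_Ioc.1 (mem_filter.1 hw).1
    exact ⟨⟨i, w, hw, rfl⟩, by omega, by omega⟩
  have hcard := Set.ncard_le_ncard hsub ((Set.finite_Icc _ _).inter_of_right _)
  rw [Set.ncard_image_of_injective _ (add_right_injective _), Set.ncard_coe_finset] at hcard
  have h8 : (8 * modulus i : ℝ) ≤ 9 * #(goodOffsets i) := by
    exact_mod_cast eight_mul_modulus_le_nine_mul_card_goodOffsets i
  have : (#(goodOffsets i) : ℝ) ≤
      (B ∩ Set.Icc (modulus (i + 1) + 1) (modulus (i + 1) + modulus i)).ncard := by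
    exact_mod_cast hcard
  linarith

lemma le_two_mul_modulus_of_mem_B {b j : ℕ} (hb : b ∈ B) (hbj : b < modulus (j + 1)) :
    b ≤ 2 * modulus j := by
  obtain ⟨i, w, hw, rfl⟩ := hb
  have hw' := mem_Ioc.1 (mem_filter.1 hw).1
  have hij : i < j := by
    have := modulus_strictMono.lt_iff_lt.1 (show modulus (i + 1) < modulus (j + 1) by omega)
    omega
  have := modulus_mono (show i + 1 ≤ j by omega)
  have := modulus_mono hij.le
  omega

lemma add_mod_ne_of_mem_B {b t m : ℕ} (hb : b ∈ B) (ht : t ≤ m) :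
    (b + t) % modulus (m + 1) ≠ modulus (m + 1) - 1 := by
  obtain ⟨i, w, hw, rfl⟩ := hb
  rw [goodOffsets, mem_filter, mem_Ioc] at hw
  obtain ⟨⟨hw0, hwi⟩, hgood⟩ := hw
  have hgap := add_two_le_gap m
  have hfit := two_mul_modulus_add_lt m
  rcases lt_trichotomy i m with him | rfl | hmi
  · have := modulus_mono (show i + 1 ≤ m by omega)
    have := modulus_mono him.le
    rw [Nat.mod_eq_of_lt (by omega)]
    omega
  · rw [add_assoc, Nat.add_mod_left, Nat.mod_eq_of_lt (by omega)]
    omega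
  · obtain ⟨c, hc⟩ := modulus_dvd_modulus (show m + 1 ≤ i + 1 by omega)
    have hwm := hgood (m + 1) (mem_Icc.2 ⟨by omega, by omega⟩)
    have := gap_lt_modulus (m + 1)
    rw [hc, add_assoc, Nat.mul_add_mod, Nat.add_mod,
      Nat.mod_eq_of_lt (show t < modulus (m + 1) by omega), Nat.mod_eq_of_lt (by omega)]
    omega

lemma notMem_add_of_mod_eq {j m h : ℕ} (hj : level j = m + 1)
    (hlo : blockStart j + 2 * modulus j + m < h) (hhi : h ≤ blockEnd j)
    (hmod : h % modulus (m + 1) = modulus (m + 1) - 1) : h ∉ A + B + Set.Icc 0 m := by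
  intro hh
  obtain ⟨_, hab, t, ht, rfl⟩ := Set.mem_add.1 hh
  obtain ⟨a, ha, b, hb, rfl⟩ := Set.mem_add.1 hab
  rw [Set.mem_Icc] at ht
  have hb2 := le_two_mul_modulus_of_mem_B hb
    ((show b < blockEnd j + 1 by omega).trans_le (blockEnd_add_one_le_modulus j))
  have hdvd := ha j (by omega) (by omega)
  rw [hj] at hdvd
  obtain ⟨c, rfl⟩ := hdvd
  rw [add_assoc, Nat.mul_add_mod] at hmod
  exact add_mod_ne_of_mem_B hb ht.2 hmod

open scoped Classical in
lemma card_filter_Icc_subset_le {j m : ℕ} (hj : level j = m + 1) :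
    #{x ∈ Ioc 0 (blockEnd j) | Set.Icc x (x + modulus (m + 1)) ⊆ A + B + Set.Icc 0 m} ≤
      blockStart j + 2 * modulus j + m + modulus (m + 1) := by
  set P := modulus (m + 1)
  set L := blockStart j + 2 * modulus j + m
  have hP : 0 < P := (nine_le_modulus _).trans_lt' (by norm_num)
  have hsub : {x ∈ Ioc 0 (blockEnd j) | Set.Icc x (x + P) ⊆ A + B + Set.Icc 0 m} ⊆
      Ioc 0 L ∪ Ioc (blockEnd j - P) (blockEnd j) := by
    intro x hx
    simp only [mem_filter, mem_Ioc, mem_union] at hx ⊢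
    obtain ⟨⟨hx0, hxr⟩, hT⟩ := hx
    by_cases hxL : x ≤ L
    · exact Or.inl ⟨hx0, hxL⟩
    refine Or.inr ⟨?_, hxr⟩
    by_contra! hxP
    obtain ⟨z, hz, hzmod⟩ := Nat.exists_mem_Ico_mod_eq (Nat.sub_one_lt hP.ne') x
    rw [mem_Ico] at hz
    exact notMem_add_of_mod_eq hj (by omega) (by omega) hzmod (hT ⟨hz.1, by omega⟩)
  calc _ ≤ #(Ioc 0 L ∪ Ioc (blockEnd j - P) (blockEnd j)) := card_le_card hsub
    _ ≤ L + P := (card_union_le _ _).trans (by simp only [Nat.card_Ioc]; omega)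

lemma four_mul_modulus_mul_add_le {j m : ℕ} (hj : level j = m + 1) :
    4 * modulus (m + 1) * (blockStart j + 2 * modulus j + m + modulus (m + 1)) + blockEnd j ≤
      2 * modulus (m + 1) * blockEnd j := by
  have hxy := modulus_level_le j
  have hm := lt_modulus (m + 1)
  have h9 := nine_le_modulus (m + 1)
  rw [hj] at hxy
  rw [blockEnd, blockStart, hj]
  obtain ⟨u, hu⟩ : ∃ u, modulus (m + 1) = u + 2 := ⟨_, (Nat.sub_add_cancel (by omega)).symm⟩
  rw [hu] at h9 hm hxy ⊢
  simp only [Nat.add_sub_cancel]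
  generalize modulus j = y at *
  have hy3 : 81 * y ≤ y ^ 3 := by
    have : 81 ≤ y * y := by nlinarith
    nlinarith
  nlinarith

lemma lowerDensityNat_setOf_Icc_subset_lt (m : ℕ) :
    lowerDensityNat {x | Set.Icc x (x + modulus (m + 1)) ⊆ A + B + Set.Icc 0 m} < 1 / 2 := by
  classical
  set P := modulus (m + 1)
  have hP : (0 : ℝ) < P := by have := nine_le_modulus (m + 1); positivity
  refine (lowerDensityNat_le_of_frequently (c := (2 * P - 1) / (4 * P)) ?_).trans_lt
    (by rw [div_lt_iff₀ (by positivity)]; linarith)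
  have hT : Tendsto (fun y => blockEnd (Nat.pair m y)) atTop atTop :=
    tendsto_atTop_mono (fun y => (Nat.right_le_pair m y).trans (le_blockEnd _)) tendsto_id
  refine hT.frequently ((eventually_gt_atTop m).frequently.mono fun y hy => ?_)
  have hj := level_pair hy
  generalize Nat.pair m y = j at hj ⊢
  rw [ncard_inter_Icc_eq_card_filter, div_mul_eq_mul_div, le_div_iff₀ (by positivity)]
  have : (4 * P * #{x ∈ Ioc 0 (blockEnd j) | x ∈ {x | Set.Icc x (x + P) ⊆ A + B + Set.Icc 0 m}} +
      blockEnd j : ℝ) ≤ 2 * P * blockEnd j := by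
    exact_mod_cast (Nat.add_le_add_right (Nat.mul_le_mul_left _ (card_filter_Icc_subset_le hj))
      _).trans (four_mul_modulus_mul_add_le hj)
  linarith

end Counterexample

theorem stmt_15 :
    ∃ A B : Set ℕ, lowerDensityNat A = 1 / 2 ∧ 8 / 9 ≤ banachDensityNat B ∧
      ∀ m : ℕ, ∃ k : ℕ,
        lowerDensityNat {x : ℕ | Set.Icc x (x + k) ⊆ A + B + Set.Icc 0 m} < 1 / 2 :=
  ⟨Counterexample.A, Counterexample.B, Counterexample.lowerDensityNat_A,
    Counterexample.banachDensityNat_B,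
    fun m => ⟨_, Counterexample.lowerDensityNat_setOf_Icc_subset_lt m⟩⟩
end
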